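/- arXiv:1203.5750 — 2 statements merged into one kernel-verified Lean document; each statement's English description precedes it below -/
import Mathlib

section
/- For all integers k and l with k + l ≠ 0, the operators L_k satisfy L_k ∘ L_l − L_l ∘ L_k = N·(k − l)·L_{k+l} as linear operators on R. -/
/-!
Setup: `E ⊆ ℤ` a set of "exponents" with `E = -E`, `E ∩ Nℤ = ∅`, and `E + N ⊆ E`;
`R = ℂ[x_j : j ∈ E₊]` the polynomial ring; `p j` the operators `∂/∂x_j` (for `j ∈ E₊`)
and multiplication by `(-j)·x_{-j}` (for `-j ∈ E₊`); and the Virasoro operators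
`L_k f = (1/2)·Σ_{j∈E₊} ( p_{Nk-j}(p_j f) + p_{-j}(p_{Nk+j} f) )`, the sum being
locally finite (formalized via `finsum`).
-/

open MvPolynomial

noncomputable section

/-- The set `E₊` of positive exponents. -/
def Epos (E : Set ℤ) : Set ℤ := {i : ℤ | i ∈ E ∧ 0 < i}

/-- The polynomial ring `R = ℂ[x_j : j ∈ E₊]`. -/
abbrev Rng (E : Set ℤ) := MvPolynomial (Epos E) ℂ

open Classical in
/-- The operator `p_j` : for `j ∈ E₊` it is `∂/∂x_j`, for `-j ∈ E₊` it is
multiplication by `(-j)·x_{-j}`, and it is `0` for indices outside `E`. -/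
noncomputable def pOp (E : Set ℤ) (j : ℤ) : Rng E →ₗ[ℂ] Rng E :=
  if h : j ∈ Epos E then (pderiv (⟨j, h⟩ : Epos E)).toLinearMap
  else if h' : -j ∈ Epos E then
    LinearMap.mulLeft ℂ (MvPolynomial.C ((-j : ℤ) : ℂ) * MvPolynomial.X (⟨-j, h'⟩ : Epos E))
  else 0

/-- The Virasoro operator `L_k f = (1/2)·Σ_{j∈E₊} ( p_{Nk-j}(p_j f) + p_{-j}(p_{Nk+j} f) )`. -/
noncomputable def LOp (N : ℕ) (E : Set ℤ) (k : ℤ) (f : Rng E) : Rng E :=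
  (2 : ℂ)⁻¹ • ∑ᶠ j ∈ Epos E,
    (pOp E ((N : ℤ) * k - j) (pOp E j f) + pOp E (-j) (pOp E ((N : ℤ) * k + j) f))

/-!
Write `V c` for the operator `L_k` with `N k` replaced by `c`, so `L_k = V (N k)`. From
`[p_a, p_m] = -m δ_{a,-m}` (for `m ∈ E`) one gets `[V c, p_m] = -m p_{c+m}` whenever `E + c = E`,
and then `D = [V a, V b] - (a - b) V (a + b)` commutes with every `p_m`. Commuting with the
multiplications by `x_i` gives `D f = f · D 1`; commuting with the derivations `∂_i` gives
`∂_i (D 1) = 0`. Giving `x_j` the weight `j`, every `p_m` lowers weights by `m`, so `D 1` is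
weighted homogeneous of weight `-(a + b)`; when `a + b ≠ 0` a polynomial of nonzero weight with
vanishing partial derivatives is zero, so `D = 0`.
-/

namespace MvPolynomial

variable {R σ : Type*} [CommSemiring R]

theorem pderiv_pderiv_comm (i j : σ) (f : MvPolynomial σ R) :
    pderiv i (pderiv j f) = pderiv j (pderiv i f) := by
  classical
  ext m
  simp only [coeff_pderiv, Finsupp.add_apply, Finsupp.single_apply]
  rcases eq_or_ne i j with rfl | hij
  · rfl
  · simp only [if_neg hij, if_neg hij.symm, add_zero, add_right_comm m]
    ring

theorem pderiv_X_mul_of_ne {i j : σ} (h : j ≠ i) (g : MvPolynomial σ R) :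
    pderiv i (X j * g) = X j * pderiv i g := by
  rw [pderiv_mul, pderiv_X_of_ne h, zero_mul, zero_add]

theorem IsWeightedHomogeneous.eq_zero_of_forall_pderiv_eq_zero [NoZeroDivisors R] [CharZero R]
    {M : Type*} [AddCommMonoid M] {w : σ → M} {d : M} {φ : MvPolynomial σ R}
    (hφ : φ.IsWeightedHomogeneous w d) (hd : d ≠ 0) (h : ∀ i, pderiv i φ = 0) : φ = 0 := by
  ext s
  rw [coeff_zero]
  obtain rfl | ⟨i, hi⟩ : s = 0 ∨ ∃ i, s i ≠ 0 := by
    by_contra! hs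
    exact hs.1 (Finsupp.ext hs.2)
  · exact hφ.coeff_eq_zero 0 (by simpa using hd.symm)
  · have hs : s - Finsupp.single i 1 + Finsupp.single i 1 = s := by
      ext j
      rcases eq_or_ne i j with rfl | hij
      · simp; omega
      · simp [hij]
    have := congr_arg (coeff (s - Finsupp.single i 1)) (h i)
    rw [coeff_pderiv, hs, coeff_zero] at this
    exact (mul_eq_zero.mp this).resolve_right (Nat.cast_add_one_ne_zero _)

theorem eq_mul_map_one_of_map_X_mul (D : MvPolynomial σ R →ₗ[R] MvPolynomial σ R)
    (hD : ∀ i g, D (X i * g) = X i * D g) (f : MvPolynomial σ R) : D f = f * D 1 := by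
  induction f using MvPolynomial.induction_on with
  | C a => rw [← smul_eq_C_mul, ← map_smul, smul_eq_C_mul, mul_one]
  | add p q hp hq => rw [map_add, hp, hq, add_mul]
  | mul_X p i hp => rw [mul_comm, hD, hp, mul_assoc]

end MvPolynomial

section pOp

variable {E : Set ℤ} {a b j m : ℤ} (f : Rng E)

theorem pOp_of_mem (h : j ∈ Epos E) : pOp E j f = pderiv ⟨j, h⟩ f := by
  rw [pOp, dif_pos h]
  rfl

theorem pOp_neg_of_mem (h : j ∈ Epos E) : pOp E (-j) f = (j : ℂ) • (X ⟨j, h⟩ * f) := by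
  have h' : -j ∉ Epos E := fun h' => by linarith [h.2, h'.2]
  rw [pOp, dif_neg h', dif_pos (by simpa using h)]
  simp only [LinearMap.mulLeft_apply, neg_neg, C_mul', smul_mul_assoc]

theorem pOp_of_notMem (h : j ∉ Epos E) (h' : -j ∉ Epos E) : pOp E j = 0 := by
  rw [pOp, dif_neg h, dif_neg h']

theorem pOp_zero_index : pOp E 0 = 0 :=
  pOp_of_notMem (fun h => h.2.false) (fun h => h.2.false)

theorem pOp_eq_zero_of_notMem (hE : ∀ j, j ∈ E ↔ -j ∈ E) (h : j ∉ E) : pOp E j = 0 :=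
  pOp_of_notMem (fun h' => h h'.1) (fun h' => h ((hE j).2 h'.1))

theorem pOp_cases (j : ℤ) :
    j ∈ Epos E ∨ (∃ i, ∃ _ : i ∈ Epos E, j = -i) ∨ pOp E j = 0 := by
  by_cases h : j ∈ Epos E
  · exact .inl h
  by_cases h' : -j ∈ Epos E
  · exact .inr (.inl ⟨-j, h', by ring⟩)
  · exact .inr (.inr (pOp_of_notMem h h'))

theorem pOp_neg_pOp_comm (ha : a ∈ Epos E) (hb : b ∈ Epos E) (hab : a ≠ b) :
    pOp E a (pOp E (-b) f) = pOp E (-b) (pOp E a f) := by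
  rw [pOp_of_mem _ ha, pOp_of_mem _ ha, pOp_neg_of_mem _ hb, pOp_neg_of_mem _ hb,
    Derivation.map_smul, pderiv_X_mul_of_ne (by simpa [Subtype.ext_iff] using hab.symm)]

theorem pOp_pOp_comm (hab : a + b ≠ 0) :
    pOp E a (pOp E b f) = pOp E b (pOp E a f) := by
  rcases pOp_cases (E := E) a with ha | ⟨a, ha, rfl⟩ | ha <;>
  rcases pOp_cases (E := E) b with hb | ⟨b, hb, rfl⟩ | hb <;>
  try simp only [ha, hb, LinearMap.zero_apply, map_zero]
  · rw [pOp_of_mem _ ha, pOp_of_mem _ hb, pOp_of_mem _ hb, pOp_of_mem _ ha, pderiv_pderiv_comm]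
  · exact pOp_neg_pOp_comm f ha hb (by omega)
  · exact (pOp_neg_pOp_comm f hb ha (by omega)).symm
  · simp only [pOp_neg_of_mem _ ha, pOp_neg_of_mem _ hb, mul_smul_comm, smul_smul]
    rw [mul_comm (a : ℂ), mul_left_comm]

theorem pOp_pOp_neg (ha : a ∈ Epos E) :
    pOp E a (pOp E (-a) f) = pOp E (-a) (pOp E a f) + (a : ℂ) • f := by
  rw [pOp_of_mem _ ha, pOp_of_mem _ ha, pOp_neg_of_mem _ ha, pOp_neg_of_mem _ ha,
    Derivation.map_smul, pderiv_mul, pderiv_X_self, one_mul, smul_add, add_comm]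

end pOp

theorem finite_setOf_pOp_ne_zero {E : Set ℤ} (f : Rng E) :
    {j : ℤ | 0 < j ∧ pOp E j f ≠ 0}.Finite := by
  refine ((f.vars : Set (Epos E)).toFinite.image Subtype.val).subset ?_
  rintro j ⟨hj, hne⟩
  by_cases h : j ∈ Epos E
  · refine ⟨⟨j, h⟩, ?_, rfl⟩
    by_contra hv
    exact hne (by rw [pOp_of_mem f h]; exact pderiv_eq_zero_of_notMem_vars hv)
  · exact absurd (by rw [pOp_of_notMem h fun h' => by linarith [h'.2]]; rfl) hne

theorem isWeightedHomogeneous_pOp {E : Set ℤ} {j d d' : ℤ} {φ : Rng E}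
    (hφ : φ.IsWeightedHomogeneous (↑) d) (h : d' + j = d) :
    (pOp E j φ).IsWeightedHomogeneous (↑) d' := by
  rcases pOp_cases (E := E) j with hj | ⟨j, hj, rfl⟩ | hj
  · rw [pOp_of_mem _ hj]
    exact hφ.pderiv h
  · rw [pOp_neg_of_mem _ hj]
    refine (weightedHomogeneousSubmodule ℂ _ d').smul_mem _ ?_
    rw [mem_weightedHomogeneousSubmodule, show d' = j + d by omega]
    exact (isWeightedHomogeneous_X ℂ _ _).mul hφ
  · rw [hj]
    exact isWeightedHomogeneous_zero _ _ _

def virasoroTerm (E : Set ℤ) (c j : ℤ) : Rng E →ₗ[ℂ] Rng E :=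
  pOp E (c - j) ∘ₗ pOp E j + pOp E (-j) ∘ₗ pOp E (c + j)

theorem virasoroTerm_apply (E : Set ℤ) (c j : ℤ) (f : Rng E) :
    virasoroTerm E c j f = pOp E (c - j) (pOp E j f) + pOp E (-j) (pOp E (c + j) f) :=
  rfl

theorem finite_support_virasoroTerm (E : Set ℤ) (c : ℤ) (f : Rng E) :
    (Epos E ∩ Function.support fun j => virasoroTerm E c j f).Finite := by
  refine ((finite_setOf_pOp_ne_zero f).union (((finite_setOf_pOp_ne_zero f).image (· - c)).union
    (Set.finite_Ioo 0 (-c)))).subset ?_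
  rintro j ⟨hj, hne⟩
  by_cases h1 : pOp E j f = 0
  · have h2 : pOp E (c + j) f ≠ 0 := fun h2 => hne (by simp [virasoroTerm_apply, h1, h2])
    rcases lt_trichotomy (c + j) 0 with hcj | hcj | hcj
    · exact .inr (.inr ⟨hj.2, by omega⟩)
    · exact absurd (by rw [hcj, pOp_zero_index]; rfl) h2
    · exact .inr (.inl ⟨c + j, ⟨hcj, h2⟩, by ring⟩)
  · exact .inl ⟨hj.2, h1⟩

def virasoroOp (E : Set ℤ) (c : ℤ) : Rng E →ₗ[ℂ] Rng E where
  toFun f := (2 : ℂ)⁻¹ • ∑ᶠ j ∈ Epos E, virasoroTerm E c j f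
  map_add' f g := by
    simp only [map_add]
    rw [finsum_mem_add_distrib' (finite_support_virasoroTerm E c f)
      (finite_support_virasoroTerm E c g), smul_add]
  map_smul' a f := by
    have := (smulAddHom ℂ (Rng E) a).map_finsum_mem' (finite_support_virasoroTerm E c f)
    simp only [smulAddHom_apply] at this
    simp only [map_smul, RingHom.id_apply, ← this, smul_comm a]

theorem LOp_eq_virasoroOp (N : ℕ) (E : Set ℤ) (k : ℤ) (f : Rng E) :
    LOp N E k f = virasoroOp E (N * k) f :=
  rfl

theorem virasoroOp_eq_sum {E : Set ℤ} {c : ℤ} {f : Rng E} {t : Finset ℤ} (ht : ↑t ⊆ Epos E)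
    (hsupp : Epos E ∩ Function.support (fun j => virasoroTerm E c j f) ⊆ t) :
    virasoroOp E c f = (2 : ℂ)⁻¹ • ∑ j ∈ t, virasoroTerm E c j f :=
  congrArg ((2 : ℂ)⁻¹ • ·) (finsum_mem_eq_sum_of_subset _ hsupp ht)

theorem isWeightedHomogeneous_virasoroOp {E : Set ℤ} {c d d' : ℤ} {φ : Rng E}
    (hφ : φ.IsWeightedHomogeneous (↑) d) (h : d' + c = d) :
    (virasoroOp E c φ).IsWeightedHomogeneous (↑) d' := by
  refine (weightedHomogeneousSubmodule ℂ _ _).smul_mem _ <|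
    finsum_mem_induction _ (Submodule.zero_mem _) (fun _ _ => Submodule.add_mem _) fun j _ => ?_
  exact (isWeightedHomogeneous_pOp (isWeightedHomogeneous_pOp (d' := d - j) hφ (by ring))
    (by omega)).add
    (isWeightedHomogeneous_pOp (isWeightedHomogeneous_pOp (d' := d - (c + j)) hφ (by ring))
      (by omega))

section commutation

variable {E : Set ℤ} (hE : ∀ j, j ∈ E ↔ -j ∈ E) {a b m : ℤ} (f : Rng E)
include hE

theorem pOp_pOp_of_mem (hm : m ∈ E) :
    pOp E a (pOp E m f) = pOp E m (pOp E a f) + if a = -m then -(m : ℂ) • f else 0 := by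
  by_cases ham : a = -m
  · subst ham
    rw [if_pos rfl]
    rcases lt_trichotomy m 0 with hm0 | rfl | hm0
    · simpa using pOp_pOp_neg f (a := -m) ⟨(hE m).1 hm, by omega⟩
    · simp [pOp_zero_index]
    · rw [pOp_pOp_neg f ⟨hm, hm0⟩]
      module
  · rw [if_neg ham, add_zero, pOp_pOp_comm f (by omega)]

theorem pOp_pOp_pOp_of_mem (hm : m ∈ E) :
    pOp E a (pOp E b (pOp E m f)) = pOp E m (pOp E a (pOp E b f))
      + (if a = -m then -(m : ℂ) • pOp E b f else 0)
      + (if b = -m then -(m : ℂ) • pOp E a f else 0) := by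
  rw [pOp_pOp_of_mem hE f hm, map_add, pOp_pOp_of_mem hE _ hm, apply_ite (pOp E a),
    map_smul, map_zero]

theorem virasoroTerm_pOp (hm : m ∈ E) (c j : ℤ) :
    virasoroTerm E c j (pOp E m f) = pOp E m (virasoroTerm E c j f)
      + ((if j = m then -(m : ℂ) • pOp E (c + m) f else 0)
        + (if j = -m then -(m : ℂ) • pOp E (c + m) f else 0)
        + (if j = c + m then -(m : ℂ) • pOp E (c + m) f else 0)
        + (if j = -(c + m) then -(m : ℂ) • pOp E (c + m) f else 0)) := by
  have e1 : (if c - j = -m then -(m : ℂ) • pOp E j f else 0)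
      = if j = c + m then -(m : ℂ) • pOp E (c + m) f else 0 :=
    ite_congr (propext ⟨fun _ => by omega, fun _ => by omega⟩) (fun h => by rw [h]) fun _ => rfl
  have e2 : (if j = -m then -(m : ℂ) • pOp E (c - j) f else 0)
      = if j = -m then -(m : ℂ) • pOp E (c + m) f else 0 :=
    ite_congr rfl (fun h => by rw [h, sub_neg_eq_add]) fun _ => rfl
  have e3 : (if -j = -m then -(m : ℂ) • pOp E (c + j) f else 0)
      = if j = m then -(m : ℂ) • pOp E (c + m) f else 0 :=
    ite_congr (propext neg_inj) (fun h => by rw [h]) fun _ => rfl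
  have e4 : (if c + j = -m then -(m : ℂ) • pOp E (-j) f else 0)
      = if j = -(c + m) then -(m : ℂ) • pOp E (c + m) f else 0 :=
    ite_congr (propext ⟨fun _ => by omega, fun _ => by omega⟩) (fun h => by rw [h, neg_neg])
      fun _ => rfl
  rw [virasoroTerm_apply, virasoroTerm_apply, pOp_pOp_pOp_of_mem hE f hm,
    pOp_pOp_pOp_of_mem hE f hm, map_add, e1, e2, e3, e4]
  abel

end commutation

section virasoroOp

variable {E : Set ℤ} (hE : ∀ j, j ∈ E ↔ -j ∈ E)
include hE

theorem ite_mem_add_ite_neg_mem {M : Type*} [AddCommMonoid M] {t : Finset ℤ} (ht : ↑t ⊆ Epos E)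
    {x : ℤ} (hxE : x ∈ E) (hx : x ∈ Epos E → x ∈ t) (hx' : -x ∈ Epos E → -x ∈ t) {v : M}
    (hv : x = 0 → v = 0) :
    (if x ∈ t then v else 0) + (if -x ∈ t then v else 0) = v := by
  rcases lt_trichotomy x 0 with h | rfl | h
  · rw [if_neg fun h' => by linarith [(ht h').2], if_pos (hx' ⟨(hE x).1 hxE, by omega⟩),
      zero_add]
  · simp [hv rfl]
  · rw [if_pos (hx ⟨hxE, h⟩), if_neg fun h' => by linarith [(ht h').2], add_zero]

theorem virasoroOp_pOp {c : ℤ} (hc : ∀ j, j + c ∈ E ↔ j ∈ E) (m : ℤ) (f : Rng E) :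
    virasoroOp E c (pOp E m f) = pOp E m (virasoroOp E c f) - (m : ℂ) • pOp E (c + m) f := by
  classical
  by_cases hm : m ∈ E
  swap
  · rw [pOp_eq_zero_of_notMem hE hm, pOp_eq_zero_of_notMem hE (by rwa [add_comm, hc])]
    simp
  have hcm : c + m ∈ E := by rwa [add_comm, hc]
  set t := ((finite_support_virasoroTerm E c (pOp E m f)).toFinset
    ∪ (finite_support_virasoroTerm E c f).toFinset ∪ {m, -m, c + m, -(c + m)}).filter (· ∈ Epos E)
  have ht : ↑t ⊆ Epos E := fun j hj => (Finset.mem_filter.1 hj).2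
  rw [virasoroOp_eq_sum ht fun j hj => by simp [t, hj.1, Function.mem_support.1 hj.2],
    virasoroOp_eq_sum ht fun j hj => by simp [t, hj.1, Function.mem_support.1 hj.2],
    map_smul, map_sum]
  simp only [virasoroTerm_pOp hE f hm, Finset.sum_add_distrib, Finset.sum_ite_eq']
  rw [ite_mem_add_ite_neg_mem hE ht hm (by simp [t]) (by simp [t]) (by simp +contextual),
    add_assoc, ite_mem_add_ite_neg_mem hE ht hcm (by simp [t]) (by simp [t])
    (fun h => by simp [h, pOp_zero_index])]
  module

end virasoroOp

theorem add_mul_mem_iff {N : ℕ} {E : Set ℤ} (hE : ∀ j, j ∈ E ↔ -j ∈ E)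
    (hadd : ∀ j ∈ E, j + (N : ℤ) ∈ E) (k j : ℤ) : j + N * k ∈ E ↔ j ∈ E := by
  have hN : ∀ j : ℤ, j + N ∈ E ↔ j ∈ E := fun j =>
    ⟨fun h => (hE j).2 (by simpa using hadd _ ((hE _).1 h)), hadd j⟩
  induction k using Int.induction_on generalizing j with
  | zero => simp
  | succ k ih => rw [mul_add_one, ← add_assoc, hN]; exact ih j
  | pred k ih => rw [← hN, show j + N * (-k - 1) + N = j + N * -k by ring]; exact ih j

def virasoroDefect (E : Set ℤ) (a b : ℤ) : Rng E →ₗ[ℂ] Rng E :=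
  virasoroOp E a ∘ₗ virasoroOp E b - virasoroOp E b ∘ₗ virasoroOp E a
    - ((a - b : ℤ) : ℂ) • virasoroOp E (a + b)

section virasoroDefect

variable {E : Set ℤ} (hE : ∀ j, j ∈ E ↔ -j ∈ E) {a b : ℤ}

theorem virasoroDefect_apply (f : Rng E) :
    virasoroDefect E a b f = virasoroOp E a (virasoroOp E b f)
      - virasoroOp E b (virasoroOp E a f) - ((a - b : ℤ) : ℂ) • virasoroOp E (a + b) f :=
  rfl

theorem isWeightedHomogeneous_virasoroDefect_one (a b : ℤ) :
    (virasoroDefect E a b 1).IsWeightedHomogeneous (↑) (-(a + b)) := by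
  have h1 := isWeightedHomogeneous_one ℂ ((↑) : Epos E → ℤ)
  rw [virasoroDefect_apply, ← mem_weightedHomogeneousSubmodule]
  refine Submodule.sub_mem _ (Submodule.sub_mem _ ?_ ?_) (Submodule.smul_mem _ _ ?_)
  · exact isWeightedHomogeneous_virasoroOp
      (isWeightedHomogeneous_virasoroOp (d' := -b) h1 (by ring)) (by ring)
  · exact isWeightedHomogeneous_virasoroOp
      (isWeightedHomogeneous_virasoroOp (d' := -a) h1 (by ring)) (by ring)
  · exact isWeightedHomogeneous_virasoroOp h1 (by ring)

include hE in
theorem virasoroDefect_pOp (ha : ∀ j, j + a ∈ E ↔ j ∈ E) (hb : ∀ j, j + b ∈ E ↔ j ∈ E)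
    (m : ℤ) (f : Rng E) : virasoroDefect E a b (pOp E m f) = pOp E m (virasoroDefect E a b f) := by
  have hab : ∀ j, j + (a + b) ∈ E ↔ j ∈ E := fun j => by rw [← add_assoc, hb, ha]
  simp only [virasoroDefect_apply, map_sub, map_smul, virasoroOp_pOp hE ha,
    virasoroOp_pOp hE hb, virasoroOp_pOp hE hab]
  rw [show b + (a + m) = a + b + m by ring, show a + (b + m) = a + b + m by ring]
  push_cast
  module

include hE in
theorem virasoroDefect_eq_zero (ha : ∀ j, j + a ∈ E ↔ j ∈ E) (hb : ∀ j, j + b ∈ E ↔ j ∈ E)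
    (hab : a + b ≠ 0) : virasoroDefect E a b = 0 := by
  have hD := virasoroDefect_pOp hE ha hb
  have hD1 : virasoroDefect E a b 1 = 0 := by
    refine (isWeightedHomogeneous_virasoroDefect_one a b).eq_zero_of_forall_pderiv_eq_zero
      (neg_ne_zero.2 hab) fun i => ?_
    have := hD i 1
    rwa [pOp_of_mem _ i.2, pOp_of_mem _ i.2, pderiv_one, map_zero, eq_comm] at this
  refine LinearMap.ext fun f => ?_
  rw [eq_mul_map_one_of_map_X_mul _ (fun i g => ?_) f, hD1, mul_zero, LinearMap.zero_apply]
  have := hD (-i) g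
  rw [pOp_neg_of_mem _ i.2, pOp_neg_of_mem _ i.2, map_smul] at this
  exact smul_right_injective _ (by exact_mod_cast i.2.2.ne') this

end virasoroDefect

theorem virasoro_commutator_of_sum_ne_zero_general
    (N : ℕ) (hN : 0 < N) (E : Set ℤ)
    (hEneg : ∀ j : ℤ, j ∈ E ↔ -j ∈ E)
    (hEadd : ∀ j ∈ E, j + (N : ℤ) ∈ E)
    (k l : ℤ) (hkl : k + l ≠ 0) :
    ∀ f : Rng E,
      LOp N E k (LOp N E l f) - LOp N E l (LOp N E k f)
        = (((N : ℤ) * (k - l) : ℤ) : ℂ) • LOp N E (k + l) f := by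
  intro f
  have hNkl : (N : ℤ) * k + N * l ≠ 0 := by
    rw [← mul_add]
    exact mul_ne_zero (by exact_mod_cast hN.ne') hkl
  have := LinearMap.congr_fun (virasoroDefect_eq_zero hEneg (add_mul_mem_iff hEneg hEadd k)
    (add_mul_mem_iff hEneg hEadd l) hNkl) f
  simpa only [virasoroDefect_apply, LinearMap.zero_apply, sub_eq_zero, LOp_eq_virasoroOp, mul_sub,
    mul_add] using this

/-- For all integers `k`, `l` with `k + l ≠ 0`, one has
`L_k ∘ L_l - L_l ∘ L_k = N·(k-l)·L_{k+l}` as linear operators on `R`. -/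
theorem virasoro_commutator_of_sum_ne_zero
    (N : ℕ) (hN : 0 < N) (E : Set ℤ)
    (hEneg : ∀ j : ℤ, j ∈ E ↔ -j ∈ E)
    (hEdvd : ∀ j ∈ E, ¬ ((N : ℤ) ∣ j))
    (hEadd : ∀ j ∈ E, j + (N : ℤ) ∈ E)
    (k l : ℤ) (hkl : k + l ≠ 0) :
    ∀ f : Rng E,
      LOp N E k (LOp N E l f) - LOp N E l (LOp N E k f)
        = (((N : ℤ) * (k - l) : ℤ) : ℂ) • LOp N E (k + l) f :=
  virasoro_commutator_of_sum_ne_zero_general N hN E hEneg hEadd k l hkl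
end
end

section
/- Let n ≥ 1, let L = sl_{n+1}(ℂ[λ,λ⁻¹]) be the Lie algebra of (n+1)×(n+1) trace-zero matrices over ℂ[λ,λ⁻¹] with the commutator bracket, and let Λ = Σ_{i=1}^{n} E_{i+1,i} + λ·E_{1,n+1} (so Λ^{n+1} = λ·I and Λ^j is defined for all j ∈ ℤ). Then: (i) the centralizer Z = {X ∈ L : [Λ, X] = 0} equals the ℂ-linear span of {Λ^j : j ∈ ℤ, (n+1) ∤ j}; (ii) L decomposes as the internal direct sum of ℂ-vector spaces L = Z ⊕ [Λ, L], where [Λ, L] = {[Λ, Y] : Y ∈ L}. -/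
/-!
The decomposition `L = Z ⊕ [Λ, L]` of `L = sl_{n+1}(ℂ[λ,λ⁻¹])`, where
`Λ = Σ_{i=1}^{n} E_{i+1,i} + λ·E_{1,n+1}` is the principal cyclic element and
`Z` is its centralizer, which is spanned by the powers `Λ^j` with `(n+1) ∤ j`.
`L` is formalized as the kernel of the trace on `gl_{n+1}(ℂ[λ,λ⁻¹])`, `ad_Λ` as
the ℂ-linear map `X ↦ ΛX - XΛ`, and integer powers `Λ^j` via a unit `u` with
`↑u = Λ`.
-/

open LaurentPolynomial

noncomputable section

/-- The principal cyclic element `Λ = Σ_{i=1}^{n} E_{i+1,i} + λ·E_{1,n+1}`. -/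
noncomputable def LamA (n : ℕ) : Matrix (Fin (n + 1)) (Fin (n + 1)) (LaurentPolynomial ℂ) :=
  Matrix.of fun i j =>
    if (i : ℕ) = (j : ℕ) + 1 then 1
    else if (i : ℕ) = 0 ∧ (j : ℕ) = n then T 1 else 0

/-- The ℂ-linear map `ad_Λ : X ↦ ΛX - XΛ` on `gl_{n+1}(ℂ[λ,λ⁻¹])`. -/
noncomputable def adLam (n : ℕ) :
    Matrix (Fin (n + 1)) (Fin (n + 1)) (LaurentPolynomial ℂ) →ₗ[ℂ]
      Matrix (Fin (n + 1)) (Fin (n + 1)) (LaurentPolynomial ℂ) :=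
  LinearMap.mulLeft ℂ (LamA n) - LinearMap.mulRight ℂ (LamA n)

/-- `sl_{n+1}(ℂ[λ,λ⁻¹])`: trace-zero matrices, as a ℂ-subspace of `gl_{n+1}`. -/
noncomputable def slSub (n : ℕ) :
    Submodule ℂ (Matrix (Fin (n + 1)) (Fin (n + 1)) (LaurentPolynomial ℂ)) :=
  LinearMap.ker (Matrix.traceLinearMap (Fin (n + 1)) ℂ (LaurentPolynomial ℂ))

/-!
`Λ` is invertible with explicit integer powers: `Λ^j` has entry `λ^((j - a + b)/(n+1))` at
`(a, b)` when `n + 1 ∣ j - a + b`, and `0` otherwise. Hence every matrix is uniquely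
`X = Σ_{k=0}^{n} D_k Λ^k` with `D_k` diagonal (namely `D_k = diag (X Λ^{-k})`), and
`[Λ, D Λ^j] = (σD - D) Λ^{j+1}` with `σ` the cyclic shift of the diagonal. So `[Λ, L]` consists
of the sums with every `D_k` trace-free, and the centralizer of those with every `D_k` scalar,
i.e. the `ℂ[λ,λ⁻¹]`-span of `Λ^0, …, Λ^n`, which is the `ℂ`-span of all `Λ^j`; the trace kills
the `Λ^0` term. Pairing a central `X` with `Λ^{-k}` under the trace reads off its scalar `D_k`,
while this pairing vanishes on `[Λ, L]`, so the two summands meet only in `0`.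
-/

open Finset Matrix

abbrev LoopMat (n : ℕ) := Matrix (Fin (n + 1)) (Fin (n + 1)) (LaurentPolynomial ℂ)

namespace Fin

variable {n : ℕ}

theorem eq_of_dvd_val_sub {a b : Fin (n + 1)} (h : ((n : ℤ) + 1) ∣ (a : ℤ) - b) : a = b := by
  have ha := a.isLt
  have hb := b.isLt
  have := Int.eq_zero_of_abs_lt_dvd h (abs_lt.mpr ⟨by omega, by omega⟩)
  exact Fin.ext (by omega)

theorem not_dvd_val_of_ne_zero {k : Fin (n + 1)} (hk : k ≠ 0) : ¬ ((n : ℤ) + 1) ∣ k :=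
  fun h => hk (eq_of_dvd_val_sub (by simpa using h))

theorem dvd_val_sub_sub (a b : Fin (n + 1)) :
    ((n : ℤ) + 1) ∣ ((a - b : Fin (n + 1)) : ℤ) - a + b := by
  rcases le_or_gt b a with hba | hab
  · have := Fin.coe_sub_iff_le.mpr hba
    exact ⟨0, by omega⟩
  · have := Fin.coe_sub_iff_lt.mpr hab
    exact ⟨1, by omega⟩

theorem eq_apply_zero_of_apply_sub_one {α : Type*} {f : Fin (n + 1) → α}
    (hf : ∀ a, f (a - 1) = f a) (a : Fin (n + 1)) : f a = f 0 := by
  induction a using Fin.induction with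
  | zero => rfl
  | succ i ih => rw [← ih, ← hf, ← Fin.coeSucc_eq_succ, add_sub_cancel_right]

theorem exists_apply_sub_one_sub_eq {M : Type*} [AddCommGroup M] (f : Fin (n + 1) → M)
    (hf : ∑ a, f a = 0) : ∃ e : Fin (n + 1) → M, ∀ a, e (a - 1) - e a = f a := by
  refine ⟨fun a => -∑ i ∈ Iic a, f i, fun a => ?_⟩
  dsimp only
  by_cases ha : a = 0
  · subst ha
    have hlast : Iic ((0 : Fin (n + 1)) - 1) = univ := by
      ext i
      simp only [mem_Iic, mem_univ, iff_true, Fin.le_def, Fin.coe_sub_one, if_true]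
      omega
    have hzero : Iic (0 : Fin (n + 1)) = {0} := by
      ext i; simp only [mem_Iic, mem_singleton, Fin.le_zero_iff]
    rw [hlast, hzero, hf, sum_singleton]
    abel
  · have hIic : Iic (a - 1) = Iio a := by
      have ha' : (a : ℕ) ≠ 0 := Fin.val_ne_of_ne ha
      ext i; simp only [mem_Iic, mem_Iio, Fin.le_def, Fin.lt_def, Fin.coe_sub_one, if_neg ha]
      omega
    rw [hIic, ← Iio_insert, sum_insert notMem_Iio_self]
    abel

end Fin

theorem sum_sub_inv_smul_sum {K M : Type*} [DivisionRing K] [CharZero K] [AddCommGroup M]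
    [Module K M] {n : ℕ} (f : Fin (n + 1) → M) :
    ∑ a, (f a - ((n : K) + 1)⁻¹ • ∑ b, f b) = 0 := by
  have hN : ((n : K) + 1) ≠ 0 := by exact_mod_cast n.succ_ne_zero
  rw [sum_sub_distrib, sum_const, card_univ, Fintype.card_fin, ← Nat.cast_smul_eq_nsmul K,
    Nat.cast_succ, smul_inv_smul₀ hN, sub_self]

theorem Matrix.trace_commutator_mul_eq_zero {m R : Type*} [Fintype m] [CommRing R]
    {A M : Matrix m m R} (Y : Matrix m m R) (h : Commute A M) :
    trace ((A * Y - Y * A) * M) = 0 := by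
  rw [sub_mul, trace_sub, Matrix.mul_assoc, trace_mul_comm A, Matrix.mul_assoc, Matrix.mul_assoc,
    ← h.eq, sub_self]

section ExactDivT

variable (R : Type*) [Semiring R]

def exactDivT (N m : ℤ) : LaurentPolynomial R := if N ∣ m then T (m / N) else 0

@[simp]
theorem exactDivT_zero (N : ℤ) : exactDivT R N 0 = 1 := by simp [exactDivT]

theorem exactDivT_add_mul {N : ℤ} (hN : N ≠ 0) (m k : ℤ) :
    exactDivT R N (m + N * k) = T k * exactDivT R N m := by
  by_cases h : N ∣ m
  · rw [exactDivT, exactDivT, if_pos (dvd_add h (dvd_mul_right N k)), if_pos h, ← T_add,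
      Int.add_mul_ediv_left _ _ hN, add_comm]
  · rw [exactDivT, exactDivT, if_neg ((dvd_add_left (dvd_mul_right N k)).not.mpr h), if_neg h,
      mul_zero]

end ExactDivT

section PrincipalElement

variable {n : ℕ}

def lamWeight (a : Fin (n + 1)) : LaurentPolynomial ℂ := if a = 0 then T 1 else 1

theorem isUnit_lamWeight (a : Fin (n + 1)) : IsUnit (lamWeight a) := by
  unfold lamWeight
  split_ifs
  exacts [isUnit_T 1, isUnit_one]

theorem LamA_apply (a b : Fin (n + 1)) :
    LamA n a b = if a = b + 1 then lamWeight a else 0 := by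
  simp only [LamA, Matrix.of_apply, lamWeight, Fin.ext_iff, Fin.val_add_one, Fin.val_zero,
    Fin.val_last]
  have := a.isLt
  have := b.isLt
  split_ifs <;> first | rfl | omega

theorem LamA_mul_apply (X : LoopMat n) (a b : Fin (n + 1)) :
    (LamA n * X) a b = lamWeight a * X (a - 1) b := by
  rw [mul_apply, sum_eq_single (a - 1), LamA_apply, if_pos (sub_add_cancel a 1).symm]
  · intro c _ hc
    rw [LamA_apply, if_neg (fun h => hc (eq_sub_of_add_eq h.symm)), zero_mul]
  · simp

theorem mul_LamA_apply (X : LoopMat n) (a b : Fin (n + 1)) :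
    (X * LamA n) a b = X a (b + 1) * lamWeight (b + 1) := by
  rw [mul_apply, sum_eq_single (b + 1), LamA_apply, if_pos rfl]
  · intro c _ hc
    rw [LamA_apply, if_neg hc, mul_zero]
  · simp

def lamZPow (n : ℕ) (j : ℤ) : LoopMat n :=
  Matrix.of fun a b => exactDivT ℂ ((n : ℤ) + 1) (j - a + b)

theorem lamZPow_apply (j : ℤ) (a b : Fin (n + 1)) :
    lamZPow n j a b = exactDivT ℂ ((n : ℤ) + 1) (j - a + b) := rfl

theorem LamA_mul_lamZPow (j : ℤ) : LamA n * lamZPow n j = lamZPow n (j + 1) := by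
  ext a b : 1
  rw [LamA_mul_apply, lamZPow_apply, lamZPow_apply, lamWeight, Fin.coe_sub_one]
  by_cases ha : a = 0
  · rw [if_pos ha, if_pos ha, ← exactDivT_add_mul ℂ (by omega), ha, Fin.val_zero]
    congr 1
    push_cast
    ring
  · have ha' : 1 ≤ (a : ℕ) := Nat.one_le_iff_ne_zero.mpr (Fin.val_ne_of_ne ha)
    rw [if_neg ha, if_neg ha, one_mul]
    congr 1
    push_cast [Nat.cast_sub ha']
    ring

theorem lamZPow_zero : lamZPow n 0 = 1 := by
  ext a b : 1
  rw [lamZPow_apply, one_apply]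
  by_cases h : a = b
  · simp [h]
  · rw [if_neg h, exactDivT, if_neg]
    intro hd
    refine h (Fin.eq_of_dvd_val_sub ?_)
    rw [show (a : ℤ) - b = -(0 - a + b) by ring]
    exact dvd_neg.mpr hd

def lamUnit (n : ℕ) : (LoopMat n)ˣ where
  val := LamA n
  inv := lamZPow n (-1)
  val_inv := by rw [LamA_mul_lamZPow, neg_add_cancel, lamZPow_zero]
  inv_val := mul_eq_one_comm.mp (by rw [LamA_mul_lamZPow, neg_add_cancel, lamZPow_zero])

theorem coe_lamUnit_zpow (j : ℤ) :
    ((lamUnit n ^ j : (LoopMat n)ˣ) : LoopMat n) = lamZPow n j := by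
  have hstep (i : ℤ) : ((lamUnit n ^ (i + 1) : (LoopMat n)ˣ) : LoopMat n) =
      LamA n * ((lamUnit n ^ i : (LoopMat n)ˣ) : LoopMat n) := by
    rw [add_comm i 1, _root_.zpow_one_add, Units.val_mul]
    rfl
  induction j using Int.induction_on with
  | zero => rw [zpow_zero, Units.val_one, lamZPow_zero]
  | succ i ih => rw [hstep, ih, LamA_mul_lamZPow]
  | pred i ih =>
    rw [← (lamUnit n).mul_right_inj]
    change LamA n * _ = LamA n * _
    rw [← hstep, sub_add_cancel, ih, LamA_mul_lamZPow, sub_add_cancel]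

theorem lamZPow_add (i j : ℤ) : lamZPow n (i + j) = lamZPow n i * lamZPow n j := by
  simp only [← coe_lamUnit_zpow, _root_.zpow_add, Units.val_mul]

theorem commute_LamA_lamZPow (j : ℤ) : Commute (LamA n) (lamZPow n j) := by
  rw [← coe_lamUnit_zpow]
  exact (Commute.self_zpow (lamUnit n) j).units_val

theorem lamZPow_apply_eq_zero {j : ℤ} {a b : Fin (n + 1)} (h : ¬ ((n : ℤ) + 1) ∣ j - a + b) :
    lamZPow n j a b = 0 :=
  if_neg h

theorem mul_lamZPow_apply (Y : LoopMat n) {j : ℤ} {a b : Fin (n + 1)}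
    (h : ((n : ℤ) + 1) ∣ j - a + b) : (Y * lamZPow n j) a b = Y a a * lamZPow n j a b := by
  rw [mul_apply, sum_eq_single a]
  · intro c _ hc
    rw [lamZPow_apply_eq_zero, mul_zero]
    intro hc'
    refine hc (Fin.eq_of_dvd_val_sub ?_)
    rw [show (c : ℤ) - a = j - a + b - (j - c + b) by ring]
    exact dvd_sub h hc'
  · simp

theorem T_smul_lamZPow (m j : ℤ) :
    (T m : LaurentPolynomial ℂ) • lamZPow n j = lamZPow n (j + ((n : ℤ) + 1) * m) := by
  ext a b : 1
  rw [Matrix.smul_apply, smul_eq_mul, lamZPow_apply, lamZPow_apply,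
    ← exactDivT_add_mul ℂ (by omega)]
  congr 1
  ring

theorem trace_lamZPow_of_not_dvd {j : ℤ} (h : ¬ ((n : ℤ) + 1) ∣ j) :
    trace (lamZPow n j) = 0 :=
  Finset.sum_eq_zero fun a _ => lamZPow_apply_eq_zero (by rwa [sub_add_cancel])

def principalHeisenberg (n : ℕ) : Submodule ℂ (LoopMat n) :=
  Submodule.span ℂ {M : LoopMat n | ∃ j : ℤ, ¬ ((n + 1 : ℤ) ∣ j) ∧ M = lamZPow n j}

theorem lamZPow_mem_principalHeisenberg {j : ℤ} (hj : ¬ ((n : ℤ) + 1) ∣ j) :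
    lamZPow n j ∈ principalHeisenberg n :=
  Submodule.subset_span ⟨j, hj, rfl⟩

theorem smul_lamZPow_mem_principalHeisenberg (r : LaurentPolynomial ℂ) {j : ℤ}
    (hj : ¬ ((n : ℤ) + 1) ∣ j) : r • lamZPow n j ∈ principalHeisenberg n := by
  induction r using LaurentPolynomial.induction_on' with
  | add p q hp hq => rw [add_smul]; exact add_mem hp hq
  | C_mul_T m a =>
    rw [mul_smul, T_smul_lamZPow, C_eq_algebraMap, algebraMap_smul]
    exact Submodule.smul_mem _ a
      (lamZPow_mem_principalHeisenberg ((dvd_add_left (dvd_mul_right _ m)).not.mpr hj))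

theorem mem_slSub_iff {X : LoopMat n} : X ∈ slSub n ↔ trace X = 0 := Iff.rfl

theorem principalHeisenberg_le_slSub : principalHeisenberg n ≤ slSub n :=
  Submodule.span_le.mpr fun _ ⟨_, hj, hM⟩ => hM ▸ trace_lamZPow_of_not_dvd hj

theorem adLam_apply (X : LoopMat n) : adLam n X = LamA n * X - X * LamA n := rfl

theorem adLam_eq_zero_iff {X : LoopMat n} : adLam n X = 0 ↔ Commute (LamA n) X :=
  sub_eq_zero

theorem principalHeisenberg_le_ker_adLam : principalHeisenberg n ≤ LinearMap.ker (adLam n) :=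
  Submodule.span_le.mpr fun _ ⟨j, _, hM⟩ => hM ▸ adLam_eq_zero_iff.mpr (commute_LamA_lamZPow j)

theorem trace_adLam_mul_lamZPow (Y : LoopMat n) (j : ℤ) : trace (adLam n Y * lamZPow n j) = 0 :=
  trace_commutator_mul_eq_zero Y (commute_LamA_lamZPow j)

theorem range_adLam_le_slSub : LinearMap.range (adLam n) ≤ slSub n := by
  rintro _ ⟨Y, rfl⟩
  exact mem_slSub_iff.mpr (by simpa [lamZPow_zero] using trace_adLam_mul_lamZPow Y 0)

theorem map_adLam_slSub : (slSub n).map (adLam n) = LinearMap.range (adLam n) := by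
  refine le_antisymm LinearMap.map_le_range fun X ⟨Y, hY⟩ => ?_
  have hN : ((n : ℂ) + 1) ≠ 0 := by exact_mod_cast n.succ_ne_zero
  refine ⟨Y - (((n : ℂ) + 1)⁻¹ • trace Y) • 1, ?_, ?_⟩
  · rw [SetLike.mem_coe, mem_slSub_iff, trace_sub, trace_smul, trace_one, Fintype.card_fin,
      smul_eq_mul, mul_comm, ← nsmul_eq_mul, ← Nat.cast_smul_eq_nsmul ℂ, Nat.cast_succ,
      smul_inv_smul₀ hN, sub_self]
  · rw [map_sub, hY, adLam_apply, Matrix.mul_smul, Matrix.smul_mul, Matrix.mul_one,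
      Matrix.one_mul, sub_self, sub_zero]

def lamDiag (X : LoopMat n) (k : ℤ) (a : Fin (n + 1)) : LaurentPolynomial ℂ :=
  (X * lamZPow n (-k)) a a

theorem diagonal_lamDiag_mul_lamZPow_apply (X : LoopMat n) (k : ℤ) (a b : Fin (n + 1)) :
    (diagonal (lamDiag X k) * lamZPow n k) a b =
      if ((n : ℤ) + 1) ∣ k - a + b then X a b else 0 := by
  rw [diagonal_mul]
  split_ifs with h
  · rw [lamDiag, ← mul_lamZPow_apply _ h, Matrix.mul_assoc, ← lamZPow_add, neg_add_cancel,
      lamZPow_zero, Matrix.mul_one]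
  · rw [lamZPow_apply_eq_zero h, mul_zero]

theorem sum_diagonal_lamDiag_mul_lamZPow (X : LoopMat n) :
    ∑ k : Fin (n + 1), diagonal (lamDiag X k) * lamZPow n k = X := by
  ext a b : 1
  simp only [Matrix.sum_apply, diagonal_lamDiag_mul_lamZPow_apply]
  rw [sum_eq_single (a - b), if_pos (Fin.dvd_val_sub_sub a b)]
  · intro k _ hk
    refine if_neg fun h => hk (Fin.eq_of_dvd_val_sub ?_)
    rw [show (k : ℤ) - (a - b : Fin (n + 1)) = k - a + b - ((a - b : Fin (n + 1)) - a + b) by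
      ring]
    exact dvd_sub h (Fin.dvd_val_sub_sub a b)
  · simp

theorem diag_eq_of_commute {Y : LoopMat n} (h : Commute (LamA n) Y) (a : Fin (n + 1)) :
    Y a a = Y 0 0 := by
  refine Fin.eq_apply_zero_of_apply_sub_one (f := fun a => Y a a) (fun a => ?_) a
  -- the `(a, a - 1)` entry of `Λ Y = Y Λ` reads `w a * Y (a - 1) (a - 1) = Y a a * w a`
  have := congrFun (congrFun h.eq a) (a - 1)
  rw [LamA_mul_apply, mul_LamA_apply, sub_add_cancel, mul_comm] at this
  exact (isUnit_lamWeight a).mul_right_cancel this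

theorem lamDiag_eq_of_commute {X : LoopMat n} (h : Commute (LamA n) X) (k : ℤ)
    (a : Fin (n + 1)) : lamDiag X k a = lamDiag X k 0 :=
  diag_eq_of_commute (h.mul_right (commute_LamA_lamZPow (-k))) a

theorem eq_sum_smul_lamZPow_of_commute {X : LoopMat n} (h : Commute (LamA n) X) :
    X = ∑ k : Fin (n + 1), lamDiag X k 0 • lamZPow n k := by
  conv_lhs => rw [← sum_diagonal_lamDiag_mul_lamZPow X]
  refine sum_congr rfl fun k _ => ?_
  rw [show lamDiag X k = fun _ => lamDiag X k 0 from funext (lamDiag_eq_of_commute h k),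
    ← smul_one_eq_diagonal, Matrix.smul_mul, Matrix.one_mul]

theorem trace_mul_lamZPow_neg_of_commute {X : LoopMat n} (h : Commute (LamA n) X) (k : ℤ) :
    trace (X * lamZPow n (-k)) = (n + 1) • lamDiag X k 0 := by
  change ∑ a, lamDiag X k a = _
  simp [lamDiag_eq_of_commute h k]

theorem lamDiag_eq_zero_of_commute {X : LoopMat n} (h : Commute (LamA n) X) {k : ℤ}
    (hk : trace (X * lamZPow n (-k)) = 0) : lamDiag X k 0 = 0 := by
  rw [trace_mul_lamZPow_neg_of_commute h] at hk
  exact (smul_eq_zero.mp hk).resolve_left n.succ_ne_zero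

theorem slSub_inf_ker_adLam : slSub n ⊓ LinearMap.ker (adLam n) = principalHeisenberg n := by
  refine le_antisymm (fun X ⟨hX, hXc⟩ => ?_)
    (le_inf principalHeisenberg_le_slSub principalHeisenberg_le_ker_adLam)
  have hc : Commute (LamA n) X := adLam_eq_zero_iff.mp hXc
  have h0 : lamDiag X 0 0 = 0 := lamDiag_eq_zero_of_commute hc (by
    rwa [neg_zero, lamZPow_zero, Matrix.mul_one])
  rw [eq_sum_smul_lamZPow_of_commute hc]
  refine Submodule.sum_mem _ fun k _ => ?_
  by_cases hk : k = 0
  · simp [hk, h0]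
  · exact smul_lamZPow_mem_principalHeisenberg _ (Fin.not_dvd_val_of_ne_zero hk)

theorem principalHeisenberg_inf_range_adLam :
    principalHeisenberg n ⊓ LinearMap.range (adLam n) = ⊥ := by
  refine eq_bot_iff.mpr fun X ⟨hXZ, Y, hY⟩ => ?_
  have hc : Commute (LamA n) X := adLam_eq_zero_iff.mp (principalHeisenberg_le_ker_adLam hXZ)
  rw [Submodule.mem_bot, eq_sum_smul_lamZPow_of_commute hc]
  refine sum_eq_zero fun k _ => ?_
  rw [lamDiag_eq_zero_of_commute hc (hY ▸ trace_adLam_mul_lamZPow Y _), zero_smul]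

theorem LamA_mul_diagonal (e : Fin (n + 1) → LaurentPolynomial ℂ) :
    LamA n * diagonal e = diagonal (fun a => e (a - 1)) * LamA n := by
  ext a b : 1
  rw [mul_diagonal, diagonal_mul, LamA_apply]
  split_ifs with h
  · rw [h, add_sub_cancel_right, mul_comm]
  · simp

theorem adLam_diagonal_mul_lamZPow (e : Fin (n + 1) → LaurentPolynomial ℂ) (j : ℤ) :
    adLam n (diagonal e * lamZPow n j) =
      diagonal (fun a => e (a - 1) - e a) * lamZPow n (j + 1) := by
  rw [adLam_apply, ← Matrix.mul_assoc, LamA_mul_diagonal, Matrix.mul_assoc, LamA_mul_lamZPow,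
    Matrix.mul_assoc, ← (commute_LamA_lamZPow j).eq, LamA_mul_lamZPow, ← sub_mul, diagonal_sub]

theorem diagonal_mul_lamZPow_mem_range_adLam {f : Fin (n + 1) → LaurentPolynomial ℂ}
    (hf : ∑ a, f a = 0) (j : ℤ) : diagonal f * lamZPow n j ∈ LinearMap.range (adLam n) := by
  obtain ⟨e, he⟩ := Fin.exists_apply_sub_one_sub_eq f hf
  refine ⟨diagonal e * lamZPow n (j - 1), ?_⟩
  rw [adLam_diagonal_mul_lamZPow, sub_add_cancel, funext he]

theorem slSub_le_principalHeisenberg_sup_range_adLam :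
    slSub n ≤ principalHeisenberg n ⊔ LinearMap.range (adLam n) := by
  intro X hX
  rw [← sum_diagonal_lamDiag_mul_lamZPow X]
  refine Submodule.sum_mem _ fun k _ => ?_
  set c : LaurentPolynomial ℂ := ((n : ℂ) + 1)⁻¹ • ∑ a, lamDiag X k a
  have hsplit : diagonal (lamDiag X k) * lamZPow n k =
      c • lamZPow n k + diagonal (fun a => lamDiag X k a - c) * lamZPow n k := by
    rw [smul_eq_diagonal_mul, ← add_mul, diagonal_add]
    simp only [add_sub_cancel]
  rw [hsplit]
  refine Submodule.add_mem_sup ?_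
    (diagonal_mul_lamZPow_mem_range_adLam (sum_sub_inv_smul_sum _) k)
  by_cases hk : k = 0
  · have htr : ∑ a, lamDiag X k a = 0 := by
      subst hk
      change trace (X * lamZPow n _) = 0
      simpa [lamZPow_zero] using mem_slSub_iff.mp hX
    rw [show c = 0 by simp only [c, htr, smul_zero], zero_smul]
    exact zero_mem _
  · exact smul_lamZPow_mem_principalHeisenberg _ (Fin.not_dvd_val_of_ne_zero hk)

theorem principalHeisenberg_sup_range_adLam :
    principalHeisenberg n ⊔ LinearMap.range (adLam n) = slSub n :=
  le_antisymm (sup_le principalHeisenberg_le_slSub range_adLam_le_slSub)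
    slSub_le_principalHeisenberg_sup_range_adLam
end PrincipalElement

theorem An_principal_decomposition_general (n : ℕ) :
    ∃ u : (Matrix (Fin (n + 1)) (Fin (n + 1)) (LaurentPolynomial ℂ))ˣ,
      (u : Matrix (Fin (n + 1)) (Fin (n + 1)) (LaurentPolynomial ℂ)) = LamA n ∧
      (slSub n ⊓ LinearMap.ker (adLam n)
          = Submodule.span ℂ
              {M : Matrix (Fin (n + 1)) (Fin (n + 1)) (LaurentPolynomial ℂ) |
                ∃ j : ℤ, ¬ ((n + 1 : ℤ) ∣ j) ∧
                  M = ((u ^ j : (Matrix (Fin (n + 1)) (Fin (n + 1)) (LaurentPolynomial ℂ))ˣ) :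
                    Matrix (Fin (n + 1)) (Fin (n + 1)) (LaurentPolynomial ℂ))}) ∧
      (Submodule.span ℂ
            {M : Matrix (Fin (n + 1)) (Fin (n + 1)) (LaurentPolynomial ℂ) |
              ∃ j : ℤ, ¬ ((n + 1 : ℤ) ∣ j) ∧
                M = ((u ^ j : (Matrix (Fin (n + 1)) (Fin (n + 1)) (LaurentPolynomial ℂ))ˣ) :
                  Matrix (Fin (n + 1)) (Fin (n + 1)) (LaurentPolynomial ℂ))}
          ⊔ Submodule.map (adLam n) (slSub n) = slSub n) ∧
      (Submodule.span ℂ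
            {M : Matrix (Fin (n + 1)) (Fin (n + 1)) (LaurentPolynomial ℂ) |
              ∃ j : ℤ, ¬ ((n + 1 : ℤ) ∣ j) ∧
                M = ((u ^ j : (Matrix (Fin (n + 1)) (Fin (n + 1)) (LaurentPolynomial ℂ))ˣ) :
                  Matrix (Fin (n + 1)) (Fin (n + 1)) (LaurentPolynomial ℂ))}
          ⊓ Submodule.map (adLam n) (slSub n) = ⊥) := by
  refine ⟨lamUnit n, rfl, ?_⟩
  simp only [coe_lamUnit_zpow, map_adLam_slSub]
  exact ⟨slSub_inf_ker_adLam, principalHeisenberg_sup_range_adLam,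
    principalHeisenberg_inf_range_adLam⟩

/-- Let `L = sl_{n+1}(ℂ[λ,λ⁻¹])` and `Λ` the principal cyclic element (invertible,
with powers `Λ^j = ↑(u^j)` for `j ∈ ℤ`).  Then (i) the centralizer
`{X ∈ L : [Λ,X] = 0}` equals the ℂ-span `Z` of `{Λ^j : j ∈ ℤ, (n+1) ∤ j}`, and
(ii) `L = Z ⊕ [Λ, L]` as an internal direct sum of ℂ-subspaces. -/
theorem An_principal_decomposition (n : ℕ) (hn : 1 ≤ n) :
    ∃ u : (Matrix (Fin (n + 1)) (Fin (n + 1)) (LaurentPolynomial ℂ))ˣ,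
      (u : Matrix (Fin (n + 1)) (Fin (n + 1)) (LaurentPolynomial ℂ)) = LamA n ∧
      (slSub n ⊓ LinearMap.ker (adLam n)
          = Submodule.span ℂ
              {M : Matrix (Fin (n + 1)) (Fin (n + 1)) (LaurentPolynomial ℂ) |
                ∃ j : ℤ, ¬ ((n + 1 : ℤ) ∣ j) ∧
                  M = ((u ^ j : (Matrix (Fin (n + 1)) (Fin (n + 1)) (LaurentPolynomial ℂ))ˣ) :
                    Matrix (Fin (n + 1)) (Fin (n + 1)) (LaurentPolynomial ℂ))}) ∧
      (Submodule.span ℂ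
            {M : Matrix (Fin (n + 1)) (Fin (n + 1)) (LaurentPolynomial ℂ) |
              ∃ j : ℤ, ¬ ((n + 1 : ℤ) ∣ j) ∧
                M = ((u ^ j : (Matrix (Fin (n + 1)) (Fin (n + 1)) (LaurentPolynomial ℂ))ˣ) :
                  Matrix (Fin (n + 1)) (Fin (n + 1)) (LaurentPolynomial ℂ))}
          ⊔ Submodule.map (adLam n) (slSub n) = slSub n) ∧
      (Submodule.span ℂ
            {M : Matrix (Fin (n + 1)) (Fin (n + 1)) (LaurentPolynomial ℂ) |
              ∃ j : ℤ, ¬ ((n + 1 : ℤ) ∣ j) ∧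
                M = ((u ^ j : (Matrix (Fin (n + 1)) (Fin (n + 1)) (LaurentPolynomial ℂ))ˣ) :
                  Matrix (Fin (n + 1)) (Fin (n + 1)) (LaurentPolynomial ℂ))}
          ⊓ Submodule.map (adLam n) (slSub n) = ⊥) :=
  An_principal_decomposition_general n
end
end
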